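/- arXiv:2203.06446 — 3 statements merged into one kernel-verified Lean document; each statement's English description precedes it below -/
import Mathlib

section
/- Let V be a real vector space and consider a system of K+1 linear equations in variables x_0,...,x_n ∈ V of the form ∑_i a_{ik} x_i + ∑_j b_{jk} v_j = 0 (0 ≤ k ≤ K), where v_0,...,v_{2g} ∈ V are fixed vectors and the integer coefficients satisfy: (1) the system has exactly one solution (x_0,...,x_n) ∈ V^{n+1}; (2) for every subset A of {0,...,K} and all indices i, j, the partial sums ∑_{k∈A} a_{ik} and ∑_{k∈A} b_{jk} lie in {-1,0,1}. Then the unique solution satisfies x_i = ∑_j c_{ij} v_j with all c_{ij} ∈ {-1,0,1}. -/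
/-!
Adjoin to the system the negative of the sum of its equations. The coefficient row of each
unknown then sums to zero and still has all its partial sums in `{-1, 0, 1}`, so it is `e p - e q`: the unknowns are the edges of a multigraph on the equations. Uniqueness of
the solution makes these rows linearly independent, i.e. the graph is a forest. Summing the
equations over the vertices still joined to the head of the edge `x i₀` once that edge is removed
cancels every other unknown and leaves `x i₀ + ∑ j, (∑ k ∈ A, b j k) • v j = 0`.
-/

open Finset

section ExtendByNegSum

variable {κ M : Type*} [Fintype κ] [AddCommGroup M]

def extendByNegSum (f : κ → M) : Option κ → M := fun o => o.elim (-∑ k, f k) f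

@[simp] lemma extendByNegSum_some (f : κ → M) (k : κ) : extendByNegSum f (some k) = f k := rfl

@[simp] lemma extendByNegSum_none (f : κ → M) : extendByNegSum f none = -∑ k, f k := rfl

lemma sum_extendByNegSum (f : κ → M) : ∑ o, extendByNegSum f o = 0 := by
  simp [Fintype.sum_option]

lemma sum_extendByNegSum_of_none_notMem (f : κ → M) {s : Finset (Option κ)} (hs : none ∉ s) :
    ∑ o ∈ s, extendByNegSum f o = ∑ k ∈ eraseNone s, f k := by
  rw [sum_eraseNone]
  refine sum_congr rfl fun o ho => ?_
  cases o with
  | none => exact absurd ho hs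
  | some k => rfl

lemma sum_extendByNegSum_mem {S : Set M} (hS : ∀ m ∈ S, -m ∈ S) {f : κ → M}
    (hf : ∀ A : Finset κ, ∑ k ∈ A, f k ∈ S) (s : Finset (Option κ)) :
    ∑ o ∈ s, extendByNegSum f o ∈ S := by
  classical
  by_cases hs : none ∈ s
  · have hcompl : ∑ o ∈ s, extendByNegSum f o = -∑ o ∈ sᶜ, extendByNegSum f o := by
      rw [eq_neg_iff_add_eq_zero, sum_add_sum_compl, sum_extendByNegSum]
    rw [hcompl, sum_extendByNegSum_of_none_notMem f (by simpa using hs)]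
    exact hS _ (hf _)
  · rw [sum_extendByNegSum_of_none_notMem f hs]
    exact hf _

lemma extendByNegSum_system_eq_zero {ι J V : Type*} [Fintype ι] [Fintype J] [AddCommGroup V]
    [Module ℝ V] {r : ι → κ → ℤ} {s : J → κ → ℤ} {x : ι → V} {v : J → V}
    (h : ∀ k, ∑ i, (r i k : ℝ) • x i + ∑ j, (s j k : ℝ) • v j = 0) (o : Option κ) :
    ∑ i, ((extendByNegSum (r i) o : ℤ) : ℝ) • x i
      + ∑ j, ((extendByNegSum (s j) o : ℤ) : ℝ) • v j = 0 := by
  cases o with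
  | none =>
    simp only [extendByNegSum_none, Int.cast_neg, Int.cast_sum, neg_smul, sum_neg_distrib,
      sum_smul]
    rw [sum_comm (γ := ι), sum_comm (γ := J), ← neg_add, ← sum_add_distrib, neg_eq_zero]
    exact sum_eq_zero fun k _ => h k
  | some k => exact h k

end ExtendByNegSum

lemma exists_eq_single_sub_single {κ : Type*} [Fintype κ] [DecidableEq κ] [Nonempty κ]
    {f : κ → ℤ} (hf : ∀ A : Finset κ, ∑ k ∈ A, f k ∈ ({-1, 0, 1} : Set ℤ))
    (hsum : ∑ k, f k = 0) :
    ∃ p q, f = Pi.single p 1 - Pi.single q 1 := by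
  have hf' : ∀ A : Finset κ, -1 ≤ ∑ k ∈ A, f k ∧ ∑ k ∈ A, f k ≤ 1 := fun A => by
    have := hf A; simp only [Set.mem_insert_iff, Set.mem_singleton_iff] at this; omega
  obtain rfl | ⟨k₀, hk₀⟩ := eq_or_ne f 0 |>.imp_right Function.ne_iff.1
  · obtain ⟨p⟩ := ‹Nonempty κ›
    exact ⟨p, p, by simp⟩
  obtain ⟨p, hp⟩ : ∃ p, 0 < f p := by
    by_contra! h
    exact hk₀ ((sum_eq_zero_iff_of_nonpos fun k _ => h k).1 hsum k₀ (mem_univ k₀))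
  obtain ⟨q, hq⟩ : ∃ q, f q < 0 := by
    by_contra! h
    exact hk₀ ((sum_eq_zero_iff_of_nonneg fun k _ => h k).1 hsum k₀ (mem_univ k₀))
  have hpq : p ≠ q := by rintro rfl; omega
  have hfp : f p = 1 := by have := hf' {p}; simp only [sum_singleton] at this; omega
  have hfq : f q = -1 := by have := hf' {q}; simp only [sum_singleton] at this; omega
  refine ⟨p, q, funext fun k => ?_⟩
  by_cases hkp : k = p
  · subst hkp; simp [hfp, hpq]
  by_cases hkq : k = q
  · subst hkq; simp [hfq, Ne.symm hpq]
  have h1 := hf' {p, k}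
  have h2 := hf' {q, k}
  rw [sum_pair (Ne.symm hkp)] at h1
  rw [sum_pair (Ne.symm hkq)] at h2
  simp [hkp, hkq]
  omega

lemma exists_finset_sum_eq_single {ι κ R : Type*} [Fintype κ] [DecidableEq κ] [Ring R]
    [Nontrivial R] {r : ι → κ → R} (hr : ∀ i, ∃ p q, r i = Pi.single p 1 - Pi.single q 1)
    (hli : LinearIndependent R r) (i₀ : ι) :
    ∃ A : Finset κ, ∑ k ∈ A, r i₀ k = 1 ∧ ∀ i ≠ i₀, ∑ k ∈ A, r i k = 0 := by
  classical
  obtain ⟨p, q, hi₀⟩ := hr i₀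
  set W := Submodule.span R (r '' {i₀}ᶜ)
  -- the vertices joined to `p` by the edges other than `i₀`
  set A := univ.filter fun k => (Pi.single p 1 - Pi.single k 1 : κ → R) ∈ W
  have hmem : ∀ k, k ∈ A ↔ (Pi.single p 1 - Pi.single k 1 : κ → R) ∈ W := by simp [A]
  have hp : p ∈ A := by simp [hmem]
  have hq : q ∉ A := fun h => hli.notMem_span_image (s := {i₀}ᶜ) (by simp) (hi₀ ▸ (hmem q).1 h)
  refine ⟨A, by simp [hi₀, hp, hq], fun i hi => ?_⟩
  obtain ⟨u, w, hiuw⟩ := hr i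
  have hedge : (Pi.single u 1 - Pi.single w 1 : κ → R) ∈ W :=
    hiuw ▸ Submodule.subset_span ⟨i, hi, rfl⟩
  have huw : u ∈ A ↔ w ∈ A := by
    rw [hmem, hmem]
    constructor
    · intro h; simpa using W.add_mem h hedge
    · intro h; simpa using W.sub_mem h hedge
  simp [hiuw, huw]

lemma linearIndependent_of_existsUnique {ι κ V : Type*} [Fintype ι] [AddCommGroup V] [Module ℝ V]
    [Nontrivial V] {a : ι → κ → ℤ} {y : κ → V}
    (huniq : ∃! x : ι → V, ∀ k, ∑ i, (a i k : ℝ) • x i + y k = 0) :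
    LinearIndependent ℤ a := by
  obtain ⟨x, hx, hx_uniq⟩ := huniq
  obtain ⟨w, hw⟩ := exists_ne (0 : V)
  rw [Fintype.linearIndependent_iff]
  intro t ht i
  have hshift : ∀ k, ∑ i, (a i k : ℝ) • (x i + (t i : ℝ) • w) + y k = 0 := fun k => by
    have htk : ∑ i, (a i k : ℝ) * t i = 0 := by
      exact_mod_cast by simpa [mul_comm] using congrFun ht k
    simp only [smul_add, smul_smul, sum_add_distrib, ← sum_smul, htk, zero_smul, add_zero, hx k]
  simpa [hw] using congrFun (hx_uniq _ hshift) i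

lemma finset_sum_system_eq_zero {ι J κ V : Type*} [Fintype ι] [Fintype J] [AddCommGroup V]
    [Module ℝ V] {r : ι → κ → ℤ} {s : J → κ → ℤ} {x : ι → V} {v : J → V}
    (h : ∀ k, ∑ i, (r i k : ℝ) • x i + ∑ j, (s j k : ℝ) • v j = 0) (A : Finset κ) :
    ∑ i, ((∑ k ∈ A, r i k : ℤ) : ℝ) • x i + ∑ j, ((∑ k ∈ A, s j k : ℤ) : ℝ) • v j = 0 := by
  simp only [Int.cast_sum, sum_smul]
  rw [sum_comm (γ := ι), sum_comm (γ := J), ← sum_add_distrib]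
  exact sum_eq_zero fun k _ => h k

/-- Lemma on systems of linear equations in a real vector space coming from
inverse and cycle relations of a fundamental polygon (Lemma `lem:linear`). -/
theorem stmt0 (V : Type*) [AddCommGroup V] [Module ℝ V]
    (n g K : ℕ)
    (a : Fin (n + 1) → Fin (K + 1) → ℤ)
    (b : Fin (2 * g + 1) → Fin (K + 1) → ℤ)
    (v : Fin (2 * g + 1) → V)
    -- (1) the system has exactly one solution
    (huniq : ∃! x : Fin (n + 1) → V,
      ∀ k : Fin (K + 1),
        (∑ i, (a i k : ℝ) • x i) + (∑ j, (b j k : ℝ) • v j) = 0)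
    -- (2) all partial sums of coefficients lie in {-1,0,1}
    (hpartial : ∀ A : Finset (Fin (K + 1)),
      (∀ i, (∑ k ∈ A, a i k) ∈ ({-1, 0, 1} : Set ℤ)) ∧
      (∀ j, (∑ k ∈ A, b j k) ∈ ({-1, 0, 1} : Set ℤ)))
    (x : Fin (n + 1) → V)
    (hx : ∀ k : Fin (K + 1),
      (∑ i, (a i k : ℝ) • x i) + (∑ j, (b j k : ℝ) • v j) = 0) :
    ∃ c : Fin (n + 1) → Fin (2 * g + 1) → ℤ,
      (∀ i j, c i j ∈ ({-1, 0, 1} : Set ℤ)) ∧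
      ∀ i, x i = ∑ j, (c i j : ℝ) • v j := by
  classical
  cases subsingleton_or_nontrivial V
  · exact ⟨0, by simp, fun i => Subsingleton.elim _ _⟩
  have hneg : ∀ m ∈ ({-1, 0, 1} : Set ℤ), -m ∈ ({-1, 0, 1} : Set ℤ) := by simp
  set r := fun i => extendByNegSum (a i)
  set s := fun j => extendByNegSum (b j)
  have hli : LinearIndependent ℤ r :=
    (linearIndependent_of_existsUnique huniq).of_comp (LinearMap.funLeft ℤ ℤ some)
  have hr : ∀ i, ∃ p q, r i = Pi.single p 1 - Pi.single q 1 := fun i =>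
    exists_eq_single_sub_single (sum_extendByNegSum_mem hneg fun A => (hpartial A).1 i)
      (sum_extendByNegSum _)
  choose A hA₀ hA using exists_finset_sum_eq_single hr hli
  refine ⟨fun i j => -∑ o ∈ A i, s j o,
    fun i j => hneg _ (sum_extendByNegSum_mem hneg (fun B => (hpartial B).2 j) _), fun i => ?_⟩
  have hsum := finset_sum_system_eq_zero (extendByNegSum_system_eq_zero hx) (A i)
  rw [sum_eq_single i (fun i' _ hi' => by simp [r, hA i i' hi']) (by simp), hA₀ i] at hsum
  simpa [neg_smul, sum_neg_distrib, eq_neg_iff_add_eq_zero] using hsum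
end

section
/- Let p be an odd prime and q an odd prime with q ≡ 3 (mod 4) such that -p is a quadratic residue mod q. Then there exists a residue class t mod 8q such that q divides t²+p, q² does not divide t²+p, and t²+p mod 16 lies in {1, 5, 8, 9, 12, 13}. -/
/-- Existence of a residue `t` (mod `8q`) with `q ∥ t² + p` and
`t² + p mod 16 ∈ {1,5,8,9,12,13}` (from the proof of Proposition `prop:H`). -/
theorem stmt3 (p q : ℕ) (hp : p.Prime) (hq : q.Prime)
    (hpodd : Odd p) (hqodd : Odd q) (hq4 : q % 4 = 3)
    (hqr : ∃ x : ℤ, (q : ℤ) ∣ (x ^ 2 + p)) :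
    ∃ t : ℤ, (q : ℤ) ∣ (t ^ 2 + p) ∧ ¬ ((q : ℤ) ^ 2 ∣ (t ^ 2 + p)) ∧
      ((t ^ 2 + p) % 16) ∈ ({1, 5, 8, 9, 12, 13} : Set ℤ) := by
  obtain ⟨x, hx⟩ := hqr
  have hq0 : (0:ℤ) < q := by exact_mod_cast hq.pos
  have hq1 : (1:ℤ) < q := by exact_mod_cast hq.one_lt
  have hqZ : Prime (q:ℤ) := Nat.prime_iff_prime_int.mp hq
  have hq2ne : ¬ ((q:ℤ) ∣ 2) := by
    intro h
    have h2 := Int.le_of_dvd (by norm_num) h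
    have : q ≤ 2 := by exact_mod_cast h2
    omega
  -- Step 1: find y with q ∣ y²+p and ¬ q² ∣ y²+p
  have step1 : ∃ y : ℤ, (q:ℤ) ∣ (y ^ 2 + p) ∧ ¬ ((q:ℤ)^2 ∣ (y ^ 2 + p)) := by
    by_cases h2 : (q:ℤ)^2 ∣ (x ^ 2 + p)
    · have hqx : ¬ ((q:ℤ) ∣ x) := by
        intro hdx
        have hqp : (q:ℤ) ∣ p := by
          have hxx : (q:ℤ) ∣ x ^ 2 := Dvd.dvd.pow hdx (by norm_num)
          have := dvd_sub hx hxx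
          simpa using this
        have hqp' : q ∣ p := by exact_mod_cast hqp
        have hqep : q = p := (Nat.prime_dvd_prime_iff_eq hq hp).mp hqp'
        subst hqep
        have hx2 : (q:ℤ)^2 ∣ x^2 := pow_dvd_pow_of_dvd hdx 2
        have hqq : (q:ℤ)^2 ∣ (q:ℤ) := by
          have := dvd_sub h2 hx2
          simpa using this
        have h3 := Int.le_of_dvd hq0 hqq
        nlinarith
      refine ⟨x + q, ?_, ?_⟩
      · have h4 : (x + q)^2 + p = (x^2 + p) + q * (2*x + q) := by ring
        rw [h4]
        exact dvd_add hx ⟨2*x + q, rfl⟩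
      · intro h3
        have hkey : (q:ℤ)^2 ∣ (q:ℤ) * (2*x + q) := by
          have heq : (q:ℤ) * (2*x + q) = ((x + q)^2 + p) - (x^2 + p) := by ring
          rw [heq]; exact dvd_sub h3 h2
        have hd1 : (q:ℤ) ∣ (2*x + q) := by
          rcases hkey with ⟨c, hc⟩
          refine ⟨c, ?_⟩
          have hne : (q:ℤ) ≠ 0 := by linarith
          have : (q:ℤ) * (2*x + q) = (q:ℤ) * ((q:ℤ) * c) := by rw [hc]; ring
          exact mul_left_cancel₀ hne this
        have hd2 : (q:ℤ) ∣ 2 * x := by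
          have := dvd_sub hd1 (dvd_refl (q:ℤ))
          simpa using this
        rcases hqZ.dvd_mul.mp hd2 with h | h
        · exact hq2ne h
        · exact hqx h
    · exact ⟨x, hx, h2⟩
  obtain ⟨y, hy1, hy2⟩ := step1
  have hpodd' : (p:ℤ) % 2 = 1 := by
    obtain ⟨k, hk⟩ := hpodd
    subst hk; push_cast; omega
  -- 16 ∣ q⁴ - 1 for odd q
  have h16 : (16:ℤ) ∣ (q:ℤ)^4 - 1 := by
    obtain ⟨m, hm⟩ := hqodd
    have hmZ : (q:ℤ) = 2*m + 1 := by exact_mod_cast hm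
    have h8 : (8:ℤ) ∣ (q:ℤ)^2 - 1 := by
      obtain ⟨c, hc⟩ := Int.even_mul_succ_self (m:ℤ)
      refine ⟨c, ?_⟩
      rw [hmZ]
      linear_combination 4*hc
    obtain ⟨n, hn⟩ := h8
    refine ⟨n * (4*n + 1), ?_⟩
    linear_combination ((q:ℤ)^2 + 1 + 8*n) * hn
  -- choose a
  set a : ℤ := if (p:ℤ) % 16 = 3 ∨ (p:ℤ) % 16 = 15 then 3
    else if (p:ℤ) % 16 = 7 ∨ (p:ℤ) % 16 = 11 then 1 else 0 with ha
  set t : ℤ := y + (q:ℤ)^2 * ((q:ℤ)^2 * (a - y)) with htdef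
  have hty : (q:ℤ)^2 ∣ t - y := ⟨(q:ℤ)^2 * (a - y), by rw [htdef]; ring⟩
  have hty2 : (q:ℤ)^2 ∣ t^2 - y^2 := by
    have : t^2 - y^2 = (t - y) * (t + y) := by ring
    rw [this]; exact Dvd.dvd.mul_right hty _
  have hqdvd : (q:ℤ) ∣ (t^2 + p) := by
    have h5 : (q:ℤ) ∣ t^2 - y^2 := dvd_trans (Dvd.intro q (by ring)) hty2
    have : t^2 + p = (y^2 + p) + (t^2 - y^2) := by ring
    rw [this]; exact dvd_add hy1 h5
  have hqndvd : ¬ ((q:ℤ)^2 ∣ (t^2 + p)) := by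
    intro h
    apply hy2
    have h6 : (y:ℤ)^2 + p = (t^2 + p) - (t^2 - y^2) := by ring
    rw [h6]; exact dvd_sub h hty2
  -- mod 16
  have hta : (16:ℤ) ∣ t - a := by
    obtain ⟨c, hc⟩ := h16
    refine ⟨c * (a - y), ?_⟩
    rw [htdef]
    linear_combination (a - y) * hc
  have hmodeq : (t^2 + p) % 16 = (a^2 + p) % 16 := by
    have hm1 : t ≡ a [ZMOD 16] := Int.ModEq.symm (Int.modEq_iff_dvd.mpr hta)
    exact ((hm1.pow 2).add_right (p:ℤ))
  refine ⟨t, hqdvd, hqndvd, ?_⟩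
  simp only [Set.mem_insert_iff, Set.mem_singleton_iff]
  rw [hmodeq]
  have hcases : (p:ℤ) % 16 = 1 ∨ (p:ℤ) % 16 = 3 ∨ (p:ℤ) % 16 = 5 ∨ (p:ℤ) % 16 = 7 ∨
      (p:ℤ) % 16 = 9 ∨ (p:ℤ) % 16 = 11 ∨ (p:ℤ) % 16 = 13 ∨ (p:ℤ) % 16 = 15 := by omega
  rcases hcases with h | h | h | h | h | h | h | h <;>
    simp only [ha, h] <;> norm_num <;> omega
end

section
/- Let p be prime and let a_0/b_0 < a_1/b_1 < ... < a_n/b_n be reduced fractions with a_{i+1}b_i - a_i b_{i+1} = 1, and suppose indices i < i* are paired with b_i b_{i*} + b_{i+1} b_{i*+1} ≡ 0 (mod p). Then the matrix [[a_{i*+1}b_{i+1} + a_{i*}b_i, -a_i a_{i*} - a_{i+1}a_{i*+1}], [b_i b_{i*} + b_{i+1}b_{i*+1}, -a_{i+1}b_{i*+1} - a_i b_{i*}]] has determinant 1 and lower-left entry divisible by p; i.e. it lies in Γ_0(p). -/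
/-- The hyperbolic matrices attached to a paired Farey symbol of level `p`
lie in `Γ₀(p)`: they have determinant `1` and lower-left entry divisible by `p`. -/
theorem stmt11 (p : ℕ) (hp : p.Prime) (n : ℕ) (a b : ℕ → ℤ)
    (hbpos : ∀ k ≤ n, 0 < b k)
    (hred : ∀ k ≤ n, IsCoprime (a k) (b k))
    (hmono : ∀ k < n, (a k : ℚ) / (b k : ℚ) < (a (k + 1) : ℚ) / (b (k + 1) : ℚ))
    (hfarey : ∀ k < n, a (k + 1) * b k - a k * b (k + 1) = 1)
    (i istar : ℕ) (hii : i < istar) (histar : istar + 1 ≤ n)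
    (hpair : (p : ℤ) ∣ (b i * b istar + b (i + 1) * b (istar + 1))) :
    let M : Matrix (Fin 2) (Fin 2) ℤ :=
      !![a (istar + 1) * b (i + 1) + a istar * b i,
          -(a i * a istar) - a (i + 1) * a (istar + 1);
        b i * b istar + b (i + 1) * b (istar + 1),
          -(a (i + 1) * b (istar + 1)) - a i * b istar]
    M.det = 1 ∧ (p : ℤ) ∣ M 1 0 := by
  intro M
  have hi := hfarey i (by omega)
  have hj := hfarey istar (by omega)
  constructor
  · simp only [M, Matrix.det_fin_two_of]
    linear_combination (a (istar+1) * b istar - a istar * b (istar+1)) * hi + hj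
  · simpa [M] using hpair
end
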